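/- Let (a,b) be a matching pair in L^∞(ℝ) with subordinated pair (c,d), and suppose the Wiener–Hopf operators W(c) and W(d) are invertible on L²(ℝ⁺). Then W(a)+H(b) is invertible on L²(ℝ⁺) and its inverse is given by (W(a)+H(b))⁻¹ = (I − H(c̃))∘W(c)⁻¹∘W(ã⁻¹)∘W(d)⁻¹ + H(a⁻¹)∘W(d)⁻¹. -/

import Mathlib

open MeasureTheory Complex Filter Set

noncomputable section

namespace WienerHopf

/-- The space `L²(ℝ;ℂ)`. -/
abbrev L2 : Type := Lp ℂ 2 (volume : Measure ℝ)

open Classical in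
/-- Multiplication by a function `a : ℝ → ℂ`, as a bounded operator on `L²(ℝ)`.
(It is defined to be `0` in the degenerate case where `a` is not essentially bounded.) -/
def mul (a : ℝ → ℂ) : L2 →L[ℂ] L2 :=
  if h : MemLp a ⊤ (volume : Measure ℝ) then
    LinearMap.mkContinuous
      { toFun := fun f => ((Lp.memLp f).smul (r := 2) h).toLp (a • (f : ℝ → ℂ))
        map_add' := by
          intro f g
          rw [← MemLp.toLp_add]
          apply Lp.ext
          filter_upwards [MemLp.coeFn_toLp ((Lp.memLp (f + g)).smul (r := 2) h),
            MemLp.coeFn_toLp (((Lp.memLp f).smul (r := 2) h).add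
              ((Lp.memLp g).smul (r := 2) h)),
            Lp.coeFn_add f g] with t h1 h2 h3
          rw [h1, h2]
          simp only [Pi.smul_apply, smul_eq_mul, Pi.mul_apply, Pi.add_apply]
          rw [h3]
          simp [Pi.add_apply, mul_add]
        map_smul' := by
          intro m f
          simp only [RingHom.id_apply]
          rw [← MemLp.toLp_const_smul]
          apply Lp.ext
          filter_upwards [MemLp.coeFn_toLp ((Lp.memLp (m • f)).smul (r := 2) h),
            MemLp.coeFn_toLp (((Lp.memLp f).smul (r := 2) h).const_smul m),
            Lp.coeFn_smul m f] with t h1 h2 h3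
          rw [h1, h2]
          simp only [Pi.smul_apply, smul_eq_mul, Pi.mul_apply]
          rw [h3]
          simp only [Pi.smul_apply, smul_eq_mul]
          ring
        }
      (eLpNorm a ⊤ (volume : Measure ℝ)).toReal
      (by
        intro f
        simp only [LinearMap.coe_mk, AddHom.coe_mk]
        rw [Lp.norm_toLp, Lp.norm_def]
        have hle := eLpNorm_smul_le_mul_eLpNorm (Lp.aestronglyMeasurable f) h.1
          (p := ⊤) (q := 2) (r := 2)
        calc (eLpNorm (a • (f : ℝ → ℂ)) 2 (volume : Measure ℝ)).toReal
            ≤ (eLpNorm a ⊤ (volume : Measure ℝ) * eLpNorm (f : ℝ → ℂ) 2 volume).toReal := by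
              apply ENNReal.toReal_mono _ hle
              exact ENNReal.mul_ne_top h.2.ne (Lp.eLpNorm_lt_top f).ne
          _ = (eLpNorm a ⊤ (volume : Measure ℝ)).toReal *
              (eLpNorm (f : ℝ → ℂ) 2 (volume : Measure ℝ)).toReal := ENNReal.toReal_mul)
  else 0

theorem mul_coeFn {a : ℝ → ℂ} (h : MemLp a ⊤ (volume : Measure ℝ)) (f : L2) :
    (mul a f : ℝ → ℂ) =ᵐ[volume] fun t => a t * f t := by
  rw [mul, dif_pos h]
  show ⇑(((Lp.memLp f).smul (r := 2) h).toLp (a • (f : ℝ → ℂ))) =ᵐ[volume]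
    fun t => a t * f t
  exact (MemLp.coeFn_toLp _).trans
    (Eventually.of_forall fun t => by simp [Pi.smul_apply])

/-- `(-t)`-reflection is measure preserving. -/
theorem negMP : MeasurePreserving (fun t : ℝ => -t) volume volume :=
  Measure.measurePreserving_neg (volume : Measure ℝ)

/-- The reflection operator `(Jφ)(t) = φ(-t)` on `L²(ℝ)`. -/
def reflect : L2 →L[ℂ] L2 :=
  LinearMap.mkContinuous
    { toFun := ⇑(Lp.compMeasurePreserving (fun t : ℝ => -t) negMP)
      map_add' := fun f g => map_add _ f g
      map_smul' := by
        intro m g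
        simp only [RingHom.id_apply]
        apply Lp.ext
        filter_upwards [Lp.coeFn_compMeasurePreserving (f := fun t : ℝ => -t) (m • g) negMP,
          Lp.coeFn_smul m (Lp.compMeasurePreserving (fun t : ℝ => -t) negMP g),
          Lp.coeFn_compMeasurePreserving (f := fun t : ℝ => -t) g negMP,
          negMP.quasiMeasurePreserving.ae_eq_comp (Lp.coeFn_smul m g)] with t h1 h2 h3 h4
        rw [h1, h2, h4]
        simp only [Function.comp_apply, Pi.smul_apply, smul_eq_mul]
        rw [h3]
        simp only [Function.comp_apply]
      }
    1
    (by
      intro g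
      rw [one_mul]
      exact le_of_eq (Lp.norm_compMeasurePreserving g _))

theorem reflect_coeFn (g : L2) :
    (reflect g : ℝ → ℂ) =ᵐ[volume] fun t => g (-t) :=
  Lp.coeFn_compMeasurePreserving (f := fun t : ℝ => -t) g negMP

/-- The indicator function of `(0,∞)`. -/
def chiPlus : ℝ → ℂ := Set.indicator (Set.Ioi (0 : ℝ)) (fun _ => 1)

theorem chiPlus_memℒp : MemLp chiPlus ⊤ (volume : Measure ℝ) :=
  (memLp_top_const (1 : ℂ)).indicator measurableSet_Ioi

/-- The subspace of `L²(ℝ)` consisting of functions vanishing a.e. on `(-∞,0)`;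
it is identified with `L²(ℝ⁺)`. -/
def posSubspace : Submodule ℂ L2 where
  carrier := {f : L2 | ∀ᵐ t : ℝ ∂volume, t < 0 → (f : ℝ → ℂ) t = 0}
  zero_mem' := by
    filter_upwards [Lp.coeFn_zero ℂ 2 (volume : Measure ℝ)] with t ht _
    simp [ht]
  add_mem' := by
    intro f g hf hg
    filter_upwards [hf, hg, Lp.coeFn_add f g] with t h1 h2 h3 hlt
    rw [h3]
    simp [Pi.add_apply, h1 hlt, h2 hlt]
  smul_mem' := by
    intro m f hf
    filter_upwards [hf, Lp.coeFn_smul m f] with t h1 h2 hlt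
    rw [h2]
    simp [Pi.smul_apply, h1 hlt]

/-- `L²(ℝ⁺)`, realized as the subspace of `L²(ℝ)` of functions vanishing a.e. on `(-∞,0)`. -/
abbrev Lp2Plus : Type := ↥posSubspace

theorem chiPlus_mul_mem (g : L2) : mul chiPlus g ∈ posSubspace := by
  filter_upwards [mul_coeFn chiPlus_memℒp g] with t ht hlt
  rw [ht, chiPlus, Set.indicator_of_notMem (by simpa using hlt.le), zero_mul]

/-- Compression of an operator on `L²(ℝ)` to the subspace `L²(ℝ⁺)`:
`φ ↦ χ₊ ⬝ (T φ)`. -/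
def compress (T : L2 →L[ℂ] L2) : Lp2Plus →L[ℂ] Lp2Plus :=
  LinearMap.mkContinuous
    { toFun := fun φ => ⟨mul chiPlus (T φ.val), chiPlus_mul_mem _⟩
      map_add' := by intro φ ψ; apply Subtype.ext; simp
      map_smul' := by intro m φ; apply Subtype.ext; simp }
    ‖(mul chiPlus).comp T‖
    (by intro φ; exact ((mul chiPlus).comp T).le_opNorm φ.val)

theorem compress_coe (T : L2 →L[ℂ] L2) (φ : Lp2Plus) :
    (compress T φ : L2) = mul chiPlus (T φ.val) := rfl

/-- An abstract realization of the Fourier transform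
`(𝓕φ)(ξ) = ∫ e^{iξx} φ(x) dx` on `L²(ℝ)` (together with its inverse
`(𝓕⁻¹ψ)(x) = (2π)⁻¹ ∫ e^{-iξx} ψ(ξ) dξ`): a continuous linear bijection of `L²(ℝ)`
that is given by the above integral formulas on integrable functions.  By density
of `L¹ ∩ L²` in `L²`, these properties determine the operator uniquely, and by the
Fourier–Plancherel theory such an operator exists. -/
structure FourierL2 where
  equiv : L2 ≃L[ℂ] L2
  forward : ∀ φ : L2, Integrable (φ : ℝ → ℂ) volume →
      (equiv φ : ℝ → ℂ) =ᵐ[volume]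
        fun ξ : ℝ => ∫ x : ℝ, Complex.exp (Complex.I * ξ * x) * φ x
  inverse : ∀ ψ : L2, Integrable (ψ : ℝ → ℂ) volume →
      (equiv.symm ψ : ℝ → ℂ) =ᵐ[volume]
        fun x : ℝ => (2 * Real.pi : ℂ)⁻¹ * ∫ ξ : ℝ, Complex.exp (-(Complex.I * ξ * x)) * ψ ξ

/-- `W⁰(a) = 𝓕⁻¹ M_a 𝓕`, the convolution (Fourier multiplier) operator on `L²(ℝ)`. -/
def W0 (F : FourierL2) (a : ℝ → ℂ) : L2 →L[ℂ] L2 :=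
  (F.equiv.symm : L2 →L[ℂ] L2).comp ((mul a).comp (F.equiv : L2 →L[ℂ] L2))

/-- The Wiener–Hopf operator `W(a) = χ₊ W⁰(a)` on `L²(ℝ⁺)`. -/
def W (F : FourierL2) (a : ℝ → ℂ) : Lp2Plus →L[ℂ] Lp2Plus :=
  compress (W0 F a)

/-- The Hankel operator `H(b) = χ₊ W⁰(b) J` on `L²(ℝ⁺)`. -/
def H (F : FourierL2) (b : ℝ → ℂ) : Lp2Plus →L[ℂ] Lp2Plus :=
  compress ((W0 F b).comp reflect)

/-- `a` is invertible in the Banach algebra `L^∞(ℝ)`: `a ∈ L^∞`, `a ≠ 0` a.e.,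
and the pointwise inverse `a⁻¹` again belongs to `L^∞`. -/
def InvertibleLinf (a : ℝ → ℂ) : Prop :=
  MemLp a ⊤ (volume : Measure ℝ) ∧ (∀ᵐ t : ℝ ∂volume, a t ≠ 0) ∧
    MemLp (fun t => (a t)⁻¹) ⊤ (volume : Measure ℝ)

/-- `(a,b)` is a matching pair: `a, b` are invertible in `L^∞(ℝ)` and
`a(t)a(-t) = b(t)b(-t)` for a.e. `t`. -/
def MatchingPair (a b : ℝ → ℂ) : Prop :=
  InvertibleLinf a ∧ InvertibleLinf b ∧
    ∀ᵐ t : ℝ ∂volume, a t * a (-t) = b t * b (-t)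

/-! Everything rests on the Widom identities `W(fg) = W(f)W(g) + H(f)H(g̃)` and
`H(fg) = W(f)H(g) + H(f)W(g̃)`, obtained by inserting `I = P + JPJ` (`P` = multiplication
by `χ₊`) between `W⁰(f)` and `W⁰(g)`; their only analytic input is that the Fourier transform
commutes with `J`, which is checked on simple functions. For a matching pair, `bc = a`,
`ac̃ = b` and `bã⁻¹ = d`, so the identities give `(W(a)+H(b))(I - H(c̃)) = (W(b)+H(a))W(c)`
and `(W(a)+H(b))H(a⁻¹) = W(d) - (W(b)+H(a))W(ã⁻¹)`, which make the proposed operator a right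
inverse of `W(a)+H(b)`.

It is also a left inverse because `W(a)+H(b)` is injective. If `(W(a)+H(b))φ = 0`, then
`ψ = W⁰(a)φ + W⁰(b)Jφ` vanishes on `ℝ⁺`, so `Jψ ∈ L²(ℝ⁺)`, and the matching condition gives
`W⁰(d)Jψ = ψ`; hence `W(d)Jψ = 0` and `ψ = 0`. Then `W⁰(c)φ = W⁰(b⁻¹)ψ - Jφ = -Jφ`, so
`W(c)φ = 0` and `φ = 0`. -/

theorem ae_comp_neg {p : ℝ → Prop} (h : ∀ᵐ t : ℝ ∂volume, p t) : ∀ᵐ t : ℝ ∂volume, p (-t) :=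
  negMP.quasiMeasurePreserving.ae h

theorem memLp_top_comp_neg {f : ℝ → ℂ} (hf : MemLp f ⊤ volume) :
    MemLp (fun t => f (-t)) ⊤ volume :=
  hf.comp_measurePreserving negMP

section Multiplication

variable {f g : ℝ → ℂ}

theorem mul_congr (h : f =ᵐ[volume] g) : mul f = mul g := by
  by_cases hf : MemLp f ⊤ volume
  · ext φ
    filter_upwards [mul_coeFn hf φ, mul_coeFn (hf.ae_eq h) φ, h] with t h1 h2 h3
    rw [h1, h2, h3]
  · have hg : ¬ MemLp g ⊤ volume := fun hg => hf (hg.ae_eq h.symm)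
    rw [mul, dif_neg hf, mul, dif_neg hg]

theorem mul_const_one : mul (fun _ => (1 : ℂ)) = 1 := by
  ext φ
  filter_upwards [mul_coeFn (memLp_top_const (1 : ℂ)) φ] with t ht
  simp [ht]

theorem mul_mul_mul (hf : MemLp f ⊤ volume) (hg : MemLp g ⊤ volume) :
    mul f * mul g = mul (fun t => f t * g t) := by
  ext φ
  filter_upwards [mul_coeFn hf (mul g φ), mul_coeFn hg φ, mul_coeFn (hg.mul' hf) φ]
    with t h1 h2 h3
  simp only [mul_apply_eq_comp]
  rw [h1, h2, h3, mul_assoc]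

theorem mul_add_mul (hf : MemLp f ⊤ volume) (hg : MemLp g ⊤ volume) :
    mul f + mul g = mul (fun t => f t + g t) := by
  ext φ
  filter_upwards [mul_coeFn hf φ, mul_coeFn hg φ,
    mul_coeFn (a := fun t => f t + g t) (hf.add hg) φ, Lp.coeFn_add (mul f φ) (mul g φ)]
    with t h1 h2 h3 h4
  simp only [add_apply]
  rw [h4, Pi.add_apply, h1, h2, h3, add_mul]

end Multiplication

section Reflection

theorem reflect_reflect (φ : L2) : reflect (reflect φ) = φ := by
  ext1
  filter_upwards [reflect_coeFn (reflect φ),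
    negMP.quasiMeasurePreserving.ae_eq (reflect_coeFn φ)] with t h1 h2
  rw [h1]
  exact h2.trans (congrArg φ (neg_neg t))

theorem reflect_mul_reflect : reflect * reflect = 1 :=
  ContinuousLinearMap.ext reflect_reflect

theorem reflect_mul_mul {f : ℝ → ℂ} (hf : MemLp f ⊤ volume) :
    reflect * mul f = mul (fun t => f (-t)) * reflect := by
  ext φ
  filter_upwards [reflect_coeFn (mul f φ), negMP.quasiMeasurePreserving.ae_eq (mul_coeFn hf φ),
    mul_coeFn (memLp_top_comp_neg hf) (reflect φ), reflect_coeFn φ] with t h1 h2 h3 h4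
  simp only [mul_apply_eq_comp]
  rw [h1, h3, h4]
  exact h2

end Reflection

section Fourier

theorem integrable_coe_simpleFunc (s : Lp.simpleFunc ℂ 2 (volume : Measure ℝ)) :
    Integrable ((s : L2) : ℝ → ℂ) volume :=
  ((SimpleFunc.memLp_iff_integrable (by norm_num) (by norm_num)).mp
    (Lp.simpleFunc.memLp s)).congr (Lp.simpleFunc.toSimpleFunc_eq_toFun s)

theorem integrable_reflect {φ : L2} (h : Integrable (φ : ℝ → ℂ) volume) :
    Integrable (reflect φ : ℝ → ℂ) volume :=
  (negMP.integrable_comp_of_integrable h).congr (reflect_coeFn φ).symm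

theorem FourierL2.equiv_reflect (F : FourierL2) (φ : L2) :
    F.equiv (reflect φ) = reflect (F.equiv φ) := by
  refine (Lp.simpleFunc.denseRange (p := 2) (by norm_num)).induction_on φ
    (isClosed_eq (by fun_prop) (by fun_prop)) fun s => ?_
  have hs := integrable_coe_simpleFunc s
  ext1
  filter_upwards [F.forward _ (integrable_reflect hs), reflect_coeFn (F.equiv s),
    negMP.quasiMeasurePreserving.ae_eq (F.forward _ hs)] with ξ h1 h2 h3
  rw [h1, h2]
  refine ((integral_neg_eq_self _ volume).symm.trans ?_).trans h3.symm
  refine integral_congr_ae ?_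
  filter_upwards [negMP.quasiMeasurePreserving.ae_eq (reflect_coeFn s)] with x hx
  simp only [Function.comp_apply, neg_neg] at hx
  simp only [hx, ofReal_neg, mul_neg, neg_mul]

theorem FourierL2.equiv_symm_reflect (F : FourierL2) (ψ : L2) :
    F.equiv.symm (reflect ψ) = reflect (F.equiv.symm ψ) := by
  rw [F.equiv.symm_apply_eq, F.equiv_reflect, F.equiv.apply_symm_apply]

end Fourier

section Multiplier

variable (F : FourierL2) {f g : ℝ → ℂ}

theorem W0_congr (h : f =ᵐ[volume] g) : W0 F f = W0 F g := by
  rw [W0, W0, mul_congr h]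

theorem W0_const_one : W0 F (fun _ => (1 : ℂ)) = 1 := by
  ext1 φ
  simp [W0, mul_const_one]

theorem W0_mul_W0 (hf : MemLp f ⊤ volume) (hg : MemLp g ⊤ volume) :
    W0 F f * W0 F g = W0 F (fun t => f t * g t) := by
  ext1 φ
  simp [W0, ← mul_mul_mul hf hg]

theorem reflect_mul_W0 (hf : MemLp f ⊤ volume) :
    reflect * W0 F f = W0 F (fun t => f (-t)) * reflect := by
  ext1 φ
  have h := congr($(reflect_mul_mul hf) (F.equiv φ))
  simp only [mul_apply_eq_comp] at h
  simp only [W0, mul_apply_eq_comp, ContinuousLinearMap.comp_apply, ContinuousLinearEquiv.coe_coe,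
    ← F.equiv_symm_reflect, h, F.equiv_reflect]

end Multiplier

section Projection

theorem chiPlus_of_pos {t : ℝ} (ht : 0 < t) : chiPlus t = 1 :=
  Set.indicator_of_mem ht _

theorem chiPlus_of_nonpos {t : ℝ} (ht : t ≤ 0) : chiPlus t = 0 :=
  Set.indicator_of_notMem (not_lt.mpr ht) _

theorem mul_chiPlus_add_mul_chiPlus_comp_neg :
    mul chiPlus + mul (fun t => chiPlus (-t)) = 1 := by
  rw [mul_add_mul chiPlus_memℒp (memLp_top_comp_neg chiPlus_memℒp), ← mul_const_one]
  refine mul_congr ?_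
  filter_upwards [volume.ae_ne 0] with t ht
  rcases ht.lt_or_gt with ht | ht
  · rw [chiPlus_of_nonpos ht.le, chiPlus_of_pos (neg_pos.mpr ht), zero_add]
  · rw [chiPlus_of_pos ht, chiPlus_of_nonpos (neg_nonpos.mpr ht.le), add_zero]

theorem reflect_mul_chiPlus_mul_reflect : reflect * mul chiPlus * reflect = 1 - mul chiPlus := by
  rw [reflect_mul_mul chiPlus_memℒp, mul_assoc, reflect_mul_reflect, mul_one,
    ← mul_chiPlus_add_mul_chiPlus_comp_neg, add_sub_cancel_left]

theorem mul_chiPlus_reflect_of_mem {φ : L2} (hφ : φ ∈ posSubspace) :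
    mul chiPlus (reflect φ) = 0 := by
  ext1
  filter_upwards [mul_coeFn chiPlus_memℒp (reflect φ), reflect_coeFn φ, ae_comp_neg hφ,
    Lp.coeFn_zero ℂ 2 volume] with t h1 h2 h3 h4
  rw [h1, h2, h4, Pi.zero_apply]
  rcases le_or_gt t 0 with ht | ht
  · rw [chiPlus_of_nonpos ht, zero_mul]
  · rw [h3 (neg_neg_of_pos ht), mul_zero]

theorem reflect_mem_of_mul_chiPlus_eq_zero {ψ : L2} (h : mul chiPlus ψ = 0) :
    reflect ψ ∈ posSubspace := by
  have hψ : ∀ᵐ t : ℝ ∂volume, 0 < t → (ψ : ℝ → ℂ) t = 0 := by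
    filter_upwards [mul_coeFn chiPlus_memℒp ψ, h ▸ Lp.coeFn_zero ℂ 2 volume] with t h1 h2 ht
    rwa [h2, chiPlus_of_pos ht, one_mul, Eq.comm] at h1
  filter_upwards [reflect_coeFn ψ, ae_comp_neg hψ] with t h1 h2 ht
  rw [h1]
  exact h2 (neg_pos.mpr ht)

end Projection

section WienerHopfHankel

variable (F : FourierL2) {f g : ℝ → ℂ}

theorem coe_W_apply (φ : Lp2Plus) : (W F f φ : L2) = mul chiPlus (W0 F f φ) := rfl

theorem coe_H_apply (φ : Lp2Plus) : (H F f φ : L2) = mul chiPlus (W0 F f (reflect φ)) := rfl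

theorem W_congr (h : f =ᵐ[volume] g) : W F f = W F g := by
  rw [W, W, W0_congr F h]

theorem H_congr (h : f =ᵐ[volume] g) : H F f = H F g := by
  rw [H, H, W0_congr F h]

theorem H_const_one : H F (fun _ => (1 : ℂ)) = 0 := by
  ext1 φ
  ext1
  rw [coe_H_apply, W0_const_one, one_apply_eq_self, mul_chiPlus_reflect_of_mem φ.2]
  rfl

theorem reflect_mul_chiPlus_mul_W0_comp_neg (hg : MemLp g ⊤ volume) :
    reflect * mul chiPlus * W0 F (fun t => g (-t)) = (1 - mul chiPlus) * W0 F g * reflect := by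
  calc reflect * mul chiPlus * W0 F (fun t => g (-t))
      = reflect * mul chiPlus * (W0 F (fun t => g (-t)) * reflect) * reflect := by
        rw [mul_assoc _ _ reflect, mul_assoc _ reflect, reflect_mul_reflect, mul_one]
    _ = reflect * mul chiPlus * reflect * W0 F g * reflect := by
        rw [← reflect_mul_W0 F hg]
        simp only [mul_assoc]
    _ = (1 - mul chiPlus) * W0 F g * reflect := by rw [reflect_mul_chiPlus_mul_reflect]

theorem W_mul (hf : MemLp f ⊤ volume) (hg : MemLp g ⊤ volume) :
    W F (fun t => f t * g t) = W F f * W F g + H F f * H F (fun t => g (-t)) := by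
  ext1 φ
  ext1
  have h := congr($(reflect_mul_chiPlus_mul_W0_comp_neg F hg) (reflect φ))
  simp only [mul_apply_eq_comp, sub_apply, one_apply_eq_self, reflect_reflect] at h
  simp only [add_apply, mul_apply_eq_comp, Submodule.coe_add, coe_W_apply, coe_H_apply, h,
    map_sub, ← W0_mul_W0 F hf hg]
  abel

theorem H_mul (hf : MemLp f ⊤ volume) (hg : MemLp g ⊤ volume) :
    H F (fun t => f t * g t) = W F f * H F g + H F f * W F (fun t => g (-t)) := by
  ext1 φ
  ext1
  have h := congr($(reflect_mul_chiPlus_mul_W0_comp_neg F hg) φ)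
  simp only [mul_apply_eq_comp, sub_apply, one_apply_eq_self] at h
  simp only [add_apply, mul_apply_eq_comp, Submodule.coe_add, coe_W_apply, coe_H_apply, h,
    map_sub, ← W0_mul_W0 F hf hg]
  abel

end WienerHopfHankel

namespace MatchingPair

variable (F : FourierL2) {a b c d : ℝ → ℂ}

theorem W_add_H_mul_one_sub_H (hab : MatchingPair a b) (hc : c = fun t => a t * (b t)⁻¹) :
    (W F a + H F b) * (1 - H F (fun t => c (-t))) = (W F b + H F a) * W F c := by
  obtain ⟨⟨ha, -, -⟩, ⟨hb, hb0, hbi⟩, hm⟩ := hab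
  have hcb : MemLp c ⊤ volume := hc ▸ hbi.mul' ha
  have hWa : W F a = W F b * W F c + H F b * H F (fun t => c (-t)) := by
    rw [← W_mul F hb hcb]
    refine W_congr F ?_
    filter_upwards [hb0] with t ht
    rw [hc, mul_left_comm, mul_inv_cancel₀ ht, mul_one]
  have hHb : H F b = W F a * H F (fun t => c (-t)) + H F a * W F c := by
    have h := H_mul F ha (memLp_top_comp_neg hcb)
    simp only [neg_neg] at h
    rw [← h]
    refine H_congr F ?_
    filter_upwards [hm, ae_comp_neg hb0] with t hm ht
    rw [hc, ← mul_assoc, hm, mul_inv_cancel_right₀ ht]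
  rw [← sub_eq_zero]
  calc _ = (W F a - (W F b * W F c + H F b * H F (fun t => c (-t))))
        + (H F b - (W F a * H F (fun t => c (-t)) + H F a * W F c)) := by
          simp only [mul_sub, mul_one, add_mul]
          abel
    _ = 0 := by rw [← hWa, ← hHb, sub_self, sub_self, add_zero]

theorem W_add_H_mul_H_inv (hab : MatchingPair a b) (hd : d = fun t => a t * (b (-t))⁻¹) :
    (W F a + H F b) * H F (fun t => (a t)⁻¹) =
      W F d - (W F b + H F a) * W F (fun t => (a (-t))⁻¹) := by
  obtain ⟨⟨ha, ha0, hai⟩, ⟨hb, hb0, -⟩, hm⟩ := hab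
  have hH0 : W F a * H F (fun t => (a t)⁻¹) + H F a * W F (fun t => (a (-t))⁻¹) = 0 := by
    rw [← H_mul F ha hai, ← H_const_one F]
    refine H_congr F ?_
    filter_upwards [ha0] with t ht
    exact mul_inv_cancel₀ ht
  have hWd : W F d = W F b * W F (fun t => (a (-t))⁻¹) + H F b * H F (fun t => (a t)⁻¹) := by
    have h := W_mul F hb (memLp_top_comp_neg hai)
    simp only [neg_neg] at h
    rw [← h]
    refine W_congr F ?_
    filter_upwards [hm, ae_comp_neg ha0, ae_comp_neg hb0] with t hm ha0 hb0
    rw [hd]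
    field_simp
    linear_combination hm
  rw [← sub_eq_zero]
  calc _ = (W F a * H F (fun t => (a t)⁻¹) + H F a * W F (fun t => (a (-t))⁻¹))
        - (W F d - (W F b * W F (fun t => (a (-t))⁻¹) + H F b * H F (fun t => (a t)⁻¹))) := by
          simp only [add_mul]
          abel
    _ = 0 := by rw [hH0, ← hWd, sub_self, sub_self]

theorem W0_mul_reflect_mul_W0_add (hab : MatchingPair a b)
    (hd : d = fun t => a t * (b (-t))⁻¹) :
    W0 F d * reflect * (W0 F a + W0 F b * reflect) = W0 F a + W0 F b * reflect := by
  obtain ⟨⟨ha, -, -⟩, ⟨hb, hb0, hbi⟩, hm⟩ := hab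
  have hdb : MemLp d ⊤ volume := hd ▸ (memLp_top_comp_neg hbi).mul' ha
  have hda : W0 F d * W0 F (fun t => a (-t)) = W0 F b := by
    rw [W0_mul_W0 F hdb (memLp_top_comp_neg ha)]
    refine W0_congr F ?_
    filter_upwards [hm, ae_comp_neg hb0] with t hm ht
    rw [hd, mul_right_comm, hm, mul_inv_cancel_right₀ ht]
  have hdb' : W0 F d * W0 F (fun t => b (-t)) = W0 F a := by
    rw [W0_mul_W0 F hdb (memLp_top_comp_neg hb)]
    refine W0_congr F ?_
    filter_upwards [ae_comp_neg hb0] with t ht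
    rw [hd, inv_mul_cancel_right₀ ht]
  calc W0 F d * reflect * (W0 F a + W0 F b * reflect)
      = W0 F d * (reflect * W0 F a) + W0 F d * (reflect * W0 F b) * reflect := by
        simp only [mul_add, mul_assoc]
    _ = W0 F d * W0 F (fun t => a (-t)) * reflect
        + W0 F d * W0 F (fun t => b (-t)) * (reflect * reflect) := by
        rw [reflect_mul_W0 F ha, reflect_mul_W0 F hb]
        simp only [mul_assoc]
    _ = W0 F a + W0 F b * reflect := by
        rw [hda, hdb', reflect_mul_reflect, mul_one, add_comm]

theorem W0_inv_mul_W0_add (hab : MatchingPair a b) (hc : c = fun t => a t * (b t)⁻¹) :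
    W0 F (fun t => (b t)⁻¹) * (W0 F a + W0 F b * reflect) = W0 F c + reflect := by
  obtain ⟨⟨ha, -, -⟩, ⟨hb, hb0, hbi⟩, -⟩ := hab
  have hba : W0 F (fun t => (b t)⁻¹ * a t) = W0 F c :=
    hc ▸ W0_congr F (.of_forall fun t => mul_comm _ _)
  have hbb : W0 F (fun t => (b t)⁻¹ * b t) = 1 := by
    rw [← W0_const_one F]
    refine W0_congr F ?_
    filter_upwards [hb0] with t ht
    exact inv_mul_cancel₀ ht
  rw [mul_add, ← mul_assoc, W0_mul_W0 F hbi ha, W0_mul_W0 F hbi hb, hba, hbb, one_mul]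

theorem injective_W_add_H (hab : MatchingPair a b) (hc : c = fun t => a t * (b t)⁻¹)
    (hd : d = fun t => a t * (b (-t))⁻¹) (hWc : Function.Injective (W F c))
    (hWd : Function.Injective (W F d)) : Function.Injective (W F a + H F b) := by
  rw [injective_iff_map_eq_zero]
  intro φ hφ
  set ψ : L2 := (W0 F a + W0 F b * reflect) φ with hψ_def
  have hPψ : mul chiPlus ψ = 0 := by
    simpa only [ψ, add_apply, mul_apply_eq_comp, map_add, Submodule.coe_add, coe_W_apply,
      coe_H_apply, ZeroMemClass.coe_zero] using congr(($hφ : L2))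
  have hψ : ψ = 0 := by
    have hJψ : reflect ψ ∈ posSubspace := reflect_mem_of_mul_chiPlus_eq_zero hPψ
    have hWdJψ : W F d ⟨reflect ψ, hJψ⟩ = 0 := by
      have h := congr($(hab.W0_mul_reflect_mul_W0_add F hd) (φ : L2))
      simp only [mul_apply_eq_comp, ← hψ_def] at h
      ext1
      rw [coe_W_apply, h, hPψ]
      rfl
    have hJψ0 : reflect ψ = 0 := congrArg Subtype.val (hWd (hWdJψ.trans (map_zero _).symm))
    rw [← reflect_reflect ψ, hJψ0]
    exact map_zero _
  have hWcφ : W F c φ = 0 := by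
    have h := congr($(hab.W0_inv_mul_W0_add F hc) (φ : L2))
    rw [mul_apply_eq_comp, ← hψ_def, hψ, map_zero, add_apply, eq_comm,
      add_eq_zero_iff_eq_neg] at h
    ext1
    rw [coe_W_apply, h, map_neg, mul_chiPlus_reflect_of_mem φ.2, neg_zero]
    rfl
  exact hWc (hWcφ.trans (map_zero _).symm)

end MatchingPair

/-- If `(a,b)` is a matching pair with subordinated pair `(c,d)` and the Wiener-Hopf
operators `W(c)`, `W(d)` are invertible, then `W(a)+H(b)` is invertible with inverse
`(I - H(c̃)) W(c)⁻¹ W(ã⁻¹) W(d)⁻¹ + H(a⁻¹) W(d)⁻¹`. -/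
theorem invertible_of_matching
    (F : FourierL2) (a b c d : ℝ → ℂ) (hab : MatchingPair a b)
    (hc : c = fun t => a t * (b t)⁻¹) (hd : d = fun t => a t * (b (-t))⁻¹)
    (Ci Di : Lp2Plus →L[ℂ] Lp2Plus)
    (hc1 : (W F c).comp Ci = 1) (hc2 : Ci.comp (W F c) = 1)
    (hd1 : (W F d).comp Di = 1) (hd2 : Di.comp (W F d) = 1)
    (G : Lp2Plus →L[ℂ] Lp2Plus)
    (hG : G = ((1 : Lp2Plus →L[ℂ] Lp2Plus) - H F (fun t => c (-t))).comp
        (Ci.comp ((W F (fun t => (a (-t))⁻¹)).comp Di)) +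
      (H F (fun t => (a t)⁻¹)).comp Di) :
    (W F a + H F b).comp G = 1 ∧ G.comp (W F a + H F b) = 1 := by
  simp only [← ContinuousLinearMap.mul_def] at hc1 hd1 hG
  have hright : (W F a + H F b) * G = 1 :=
    calc (W F a + H F b) * G
        = (W F a + H F b) * (1 - H F (fun t => c (-t))) * (Ci * (W F (fun t => (a (-t))⁻¹) * Di))
          + (W F a + H F b) * H F (fun t => (a t)⁻¹) * Di := by
          rw [hG]
          simp only [mul_add, mul_assoc]
      _ = (W F b + H F a) * (W F c * Ci) * (W F (fun t => (a (-t))⁻¹) * Di)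
          + (W F d * Di - (W F b + H F a) * (W F (fun t => (a (-t))⁻¹) * Di)) := by
          rw [hab.W_add_H_mul_one_sub_H F hc, hab.W_add_H_mul_H_inv F hd]
          simp only [sub_mul, mul_assoc]
      _ = 1 := by rw [hc1, hd1, mul_one, add_sub_cancel]
  have hinj := hab.injective_W_add_H F hc hd
    (Function.LeftInverse.injective fun φ => DFunLike.congr_fun hc2 φ)
    (Function.LeftInverse.injective fun φ => DFunLike.congr_fun hd2 φ)
  have hleft : Function.LeftInverse G (W F a + H F b) :=
    Function.LeftInverse.rightInverse_of_injective (f := W F a + H F b)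
      (fun ψ => DFunLike.congr_fun hright ψ) hinj
  exact ⟨hright, ContinuousLinearMap.ext hleft⟩

end WienerHopf
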